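/- Let X ∈ ℝ^{m×n} with every row standard deviation σ_i(X) positive and set σ_min = min_i σ_i(X). Then the map X ↦ P(X) = diag(σ(X))⁻¹ is Fréchet differentiable at X, and for every direction V ∈ ℝ^{m×n}, ‖DP(X)[V]‖_F ≤ (‖X‖₂/(√n·σ_min³))·‖V‖_F. -/

import Mathlib

noncomputable section

open Matrix

attribute [local instance] Matrix.frobeniusNormedAddCommGroup Matrix.frobeniusNormedSpace

/-- Frobenius norm of a real matrix. -/
def frob {m n : ℕ} (A : Matrix (Fin m) (Fin n) ℝ) : ℝ :=
  Real.sqrt (∑ i, ∑ j, A i j ^ 2)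

/-- Spectral norm (largest singular value) of a real matrix: the operator norm of the
associated linear map between Euclidean spaces. -/
def spec {m n : ℕ} (A : Matrix (Fin m) (Fin n) ℝ) : ℝ :=
  ‖LinearMap.toContinuousLinearMap (Matrix.toEuclideanLin A)‖

/-- Centering matrix `C = Iₙ - (1/n)·𝟙𝟙ᵀ`. -/
def centerC (n : ℕ) : Matrix (Fin n) (Fin n) ℝ :=
  1 - (n : ℝ)⁻¹ • Matrix.of (fun _ _ => (1 : ℝ))

/-- Row-centered matrix `M(X) = X·C`. -/
def centered {m n : ℕ} (X : Matrix (Fin m) (Fin n) ℝ) : Matrix (Fin m) (Fin n) ℝ :=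
  X * centerC n

/-- Row standard deviations `σᵢ(X) = sqrt((1/n)·Σⱼ M(X)ᵢⱼ²)`. -/
def rowSigma {m n : ℕ} (X : Matrix (Fin m) (Fin n) ℝ) (i : Fin m) : ℝ :=
  Real.sqrt ((n : ℝ)⁻¹ * ∑ j, centered X i j ^ 2)

/-- `P(X) = diag(σ₁(X),…,σ_m(X))⁻¹`. -/
def Pmat {m n : ℕ} (X : Matrix (Fin m) (Fin n) ℝ) : Matrix (Fin m) (Fin m) ℝ :=
  Matrix.diagonal fun i => (rowSigma X i)⁻¹

/-- `LayerNorm(X) = P(X)·M(X)`. -/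
def layerNorm {m n : ℕ} (X : Matrix (Fin m) (Fin n) ℝ) : Matrix (Fin m) (Fin n) ℝ :=
  Pmat X * centered X

/-! Writing `σᵢ = √(n⁻¹ Σⱼ M(X)ᵢⱼ²)`, the chain rule gives
`DP(X)[V] = diag(-⟨M(X)ᵢ, M(V)ᵢ⟩ / (n σᵢ³))`. Cauchy–Schwarz with `‖M(X)ᵢ‖ = √n σᵢ` and
`‖M(V)ᵢ‖ ≤ ‖Vᵢ‖` (centering is an orthogonal projection) bounds the `i`-th entry by
`‖Vᵢ‖ / (√n σᵢ²)`, hence `‖DP(X)[V]‖_F ≤ ‖V‖_F / (√n σ_min²)`. Finally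
`σ_min ≤ σᵢ ≤ ‖Xᵢ‖ ≤ ‖X‖₂`, because `‖Xᵢ‖²` is the `i`-th coordinate of `X Xᵢᵀ`. -/

lemma sum_sq_sub_mean_le {ι : Type*} [Fintype ι] (v : ι → ℝ) :
    ∑ j, (v j - (Fintype.card ι : ℝ)⁻¹ * ∑ k, v k) ^ 2 ≤ ∑ j, v j ^ 2 := by
  rcases isEmpty_or_nonempty ι with _ | _
  · simp
  have hN : (Fintype.card ι : ℝ) ≠ 0 := by positivity
  have hexp : ∑ j, (v j - (Fintype.card ι : ℝ)⁻¹ * ∑ k, v k) ^ 2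
      = ∑ j, v j ^ 2 - (Fintype.card ι : ℝ)⁻¹ * (∑ k, v k) ^ 2 := by
    simp only [sub_sq, Finset.sum_add_distrib, Finset.sum_sub_distrib, ← Finset.sum_mul,
      ← Finset.mul_sum, Finset.sum_const, Finset.card_univ, nsmul_eq_mul]
    field_simp
    ring
  rw [hexp]
  linarith [show 0 ≤ (Fintype.card ι : ℝ)⁻¹ * (∑ k, v k) ^ 2 by positivity]

section InvSqrt

variable {E ι : Type*} [NormedAddCommGroup E] [NormedSpace ℝ E] [Fintype ι]

lemma hasFDerivAt_inv_sqrt_mul_sum_sq (a : ℝ) (ℓ : ι → StrongDual ℝ E) {x : E}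
    (hx : 0 < a * ∑ j, ℓ j x ^ 2) :
    HasFDerivAt (fun y => (√(a * ∑ j, ℓ j y ^ 2))⁻¹)
      (-(a / √(a * ∑ j, ℓ j x ^ 2) ^ 3) • ∑ j, ℓ j x • ℓ j) x := by
  have hsq : HasFDerivAt (fun y => a * ∑ j, ℓ j y ^ 2) (a • ∑ j, (2 * ℓ j x) • ℓ j) x := by
    refine (HasFDerivAt.fun_sum fun j _ => ?_).const_mul a
    simpa using (ℓ j).hasFDerivAt.pow 2 (x := x)
  set s := √(a * ∑ j, ℓ j x ^ 2)
  have hs : s ≠ 0 := (Real.sqrt_pos.2 hx).ne'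
  refine ((hasDerivAt_inv hs).comp_hasFDerivAt x (hsq.sqrt hx.ne')).congr_fderiv ?_
  rw [show ∑ j, (2 * ℓ j x) • ℓ j = (2 : ℝ) • ∑ j, ℓ j x • ℓ j by
    simp only [Finset.smul_sum, mul_smul]]
  simp only [smul_smul]
  congr 1
  field_simp
  ring

end InvSqrt

section LayerNorm

variable {m n : ℕ}

lemma centered_apply (Y : Matrix (Fin m) (Fin n) ℝ) (i : Fin m) (j : Fin n) :
    centered Y i j = Y i j - (n : ℝ)⁻¹ * ∑ k, Y i k := by
  simp [centered, centerC, Matrix.mul_apply, Matrix.one_apply, mul_sub,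
    Finset.sum_sub_distrib, Finset.sum_mul, mul_comm]

lemma sum_centered_sq_le (Y : Matrix (Fin m) (Fin n) ℝ) (i : Fin m) :
    ∑ j, centered Y i j ^ 2 ≤ ∑ j, Y i j ^ 2 := by
  simpa only [centered_apply, Fintype.card_fin] using sum_sq_sub_mean_le (Y i)

lemma sum_centered_sq (X : Matrix (Fin m) (Fin n) ℝ) (i : Fin m) :
    ∑ j, centered X i j ^ 2 = n * rowSigma X i ^ 2 := by
  rcases Nat.eq_zero_or_pos n with rfl | hn
  · simp
  rw [rowSigma, Real.sq_sqrt (by positivity)]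
  field_simp

lemma norm_row_le_spec (X : Matrix (Fin m) (Fin n) ℝ) (i : Fin m) :
    ‖WithLp.toLp 2 (X i)‖ ≤ spec X := by
  set r : EuclideanSpace ℝ (Fin n) := WithLp.toLp 2 (X i)
  set T := LinearMap.toContinuousLinearMap (Matrix.toEuclideanLin X)
  have hrow : ‖r‖ ^ 2 = T r i := by
    rw [← real_inner_self_eq_norm_sq, EuclideanSpace.inner_eq_star_dotProduct]
    simp [T, r, Matrix.mulVec]
  have hT : T r i ≤ spec X * ‖r‖ :=
    (Real.le_norm_self _).trans ((PiLp.norm_apply_le (T r) i).trans (T.le_opNorm r))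
  rcases (norm_nonneg r).eq_or_lt with hr | hr
  · exact hr ▸ norm_nonneg T
  · exact le_of_mul_le_mul_right (by nlinarith) hr

lemma rowSigma_le_spec (X : Matrix (Fin m) (Fin n) ℝ) (i : Fin m) :
    rowSigma X i ≤ spec X := by
  calc rowSigma X i ≤ √(∑ j, centered X i j ^ 2) := by
        refine Real.sqrt_le_sqrt (mul_le_of_le_one_left (by positivity) ?_)
        exact Nat.cast_inv_le_one n
    _ ≤ √(∑ j, X i j ^ 2) := Real.sqrt_le_sqrt (sum_centered_sq_le X i)
    _ = ‖WithLp.toLp 2 (X i)‖ := by simp [EuclideanSpace.norm_eq]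
    _ ≤ spec X := norm_row_le_spec X i

lemma frob_diagonal_le (d : Fin m → ℝ) (V : Matrix (Fin m) (Fin n) ℝ) {c : ℝ}
    (hc : 0 ≤ c) (h : ∀ i, d i ^ 2 ≤ c ^ 2 * ∑ j, V i j ^ 2) :
    frob (diagonal d) ≤ c * frob V := by
  have hdiag : ∑ i, ∑ j, diagonal d i j ^ 2 = ∑ i, d i ^ 2 := by
    refine Finset.sum_congr rfl fun i _ => ?_
    rw [Finset.sum_eq_single i (fun j _ hj => by simp [diagonal_apply_ne _ (Ne.symm hj)])
      (by simp)]
    simp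
  rw [frob, frob, hdiag, ← Real.sqrt_sq hc, ← Real.sqrt_mul (sq_nonneg c), Finset.mul_sum]
  exact Real.sqrt_le_sqrt (Finset.sum_le_sum fun i _ => h i)

lemma pos_of_rowSigma_pos {X : Matrix (Fin m) (Fin n) ℝ} {i : Fin m} (hσ : 0 < rowSigma X i) :
    0 < n := by
  refine Nat.pos_of_ne_zero fun hn => hσ.ne' ?_
  simp [rowSigma, hn]

def centeredEntryCLM (i : Fin m) (j : Fin n) : Matrix (Fin m) (Fin n) ℝ →L[ℝ] ℝ :=
  LinearMap.toContinuousLinearMap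
    (entryLinearMap ℝ ℝ i j ∘ₗ mulRightLinearMap (Fin m) ℝ (centerC n))

def rowSigmaInvFDeriv (X : Matrix (Fin m) (Fin n) ℝ) (i : Fin m) :
    Matrix (Fin m) (Fin n) ℝ →L[ℝ] ℝ :=
  -((n : ℝ)⁻¹ / rowSigma X i ^ 3) • ∑ j, centered X i j • centeredEntryCLM i j

lemma rowSigmaInvFDeriv_apply (X V : Matrix (Fin m) (Fin n) ℝ) (i : Fin m) :
    rowSigmaInvFDeriv X i V
      = -((n : ℝ)⁻¹ / rowSigma X i ^ 3) * ∑ j, centered X i j * centered V i j := by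
  simp [rowSigmaInvFDeriv, centeredEntryCLM, centered]

lemma hasFDerivAt_rowSigma_inv (X : Matrix (Fin m) (Fin n) ℝ) (i : Fin m)
    (hσ : 0 < rowSigma X i) :
    HasFDerivAt (fun Y => (rowSigma Y i)⁻¹) (rowSigmaInvFDeriv X i) X :=
  hasFDerivAt_inv_sqrt_mul_sum_sq (n : ℝ)⁻¹ (centeredEntryCLM i) (Real.sqrt_pos.1 hσ)

def PmatFDeriv (X : Matrix (Fin m) (Fin n) ℝ) :
    Matrix (Fin m) (Fin n) ℝ →L[ℝ] Matrix (Fin m) (Fin m) ℝ :=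
  (LinearMap.toContinuousLinearMap (diagonalLinearMap (Fin m) ℝ ℝ)).comp
    (ContinuousLinearMap.pi (rowSigmaInvFDeriv X))

lemma PmatFDeriv_apply (X V : Matrix (Fin m) (Fin n) ℝ) :
    PmatFDeriv X V = diagonal fun i => rowSigmaInvFDeriv X i V := rfl

lemma hasFDerivAt_Pmat (X : Matrix (Fin m) (Fin n) ℝ) (hσ : ∀ i, 0 < rowSigma X i) :
    HasFDerivAt Pmat (PmatFDeriv X) X :=
  (LinearMap.toContinuousLinearMap (diagonalLinearMap (Fin m) ℝ ℝ)).hasFDerivAt.comp X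
    (hasFDerivAt_pi.2 fun i => hasFDerivAt_rowSigma_inv X i (hσ i))

lemma sq_rowSigmaInvFDeriv_apply_le (X V : Matrix (Fin m) (Fin n) ℝ) {i : Fin m}
    (hσ : 0 < rowSigma X i) :
    rowSigmaInvFDeriv X i V ^ 2 ≤ ((n : ℝ) * rowSigma X i ^ 4)⁻¹ * ∑ j, V i j ^ 2 := by
  have hn : (0 : ℝ) < n := Nat.cast_pos.2 (pos_of_rowSigma_pos hσ)
  have hCS := Finset.sum_mul_sq_le_sq_mul_sq Finset.univ (centered X i) (centered V i)
  rw [sum_centered_sq] at hCS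
  calc rowSigmaInvFDeriv X i V ^ 2
      = ((n : ℝ)⁻¹ / rowSigma X i ^ 3) ^ 2 * (∑ j, centered X i j * centered V i j) ^ 2 := by
        rw [rowSigmaInvFDeriv_apply, mul_pow, neg_sq]
    _ ≤ ((n : ℝ)⁻¹ / rowSigma X i ^ 3) ^ 2 * (n * rowSigma X i ^ 2 * ∑ j, V i j ^ 2) := by
        refine mul_le_mul_of_nonneg_left (hCS.trans ?_) (sq_nonneg _)
        exact mul_le_mul_of_nonneg_left (sum_centered_sq_le V i) (by positivity)
    _ = ((n : ℝ) * rowSigma X i ^ 4)⁻¹ * ∑ j, V i j ^ 2 := by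
        field_simp

end LayerNorm

/-- With `σ_min = min_i σᵢ(X) > 0`, the map `X ↦ P(X) = diag(σ(X))⁻¹`
is Fréchet differentiable at `X` and `‖DP(X)[V]‖_F ≤ (‖X‖₂/(√n·σ_min³))·‖V‖_F`. -/
theorem P_derivative_norm_bound {m n : ℕ} (hm : 0 < m)
    (X : Matrix (Fin m) (Fin n) ℝ) (hσ : ∀ i, 0 < rowSigma X i) :
    DifferentiableAt ℝ (fun Y : Matrix (Fin m) (Fin n) ℝ => Pmat Y) X ∧
    ∀ V : Matrix (Fin m) (Fin n) ℝ,
      frob (fderiv ℝ (fun Y : Matrix (Fin m) (Fin n) ℝ => Pmat Y) X V) ≤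
        spec X / (Real.sqrt n * (⨅ i, rowSigma X i) ^ 3) * frob V := by
  have hP := hasFDerivAt_Pmat X hσ
  refine ⟨hP.differentiableAt, fun V => ?_⟩
  have : Nonempty (Fin m) := ⟨⟨0, hm⟩⟩
  obtain ⟨imin, himin⟩ := exists_eq_ciInf_of_finite (f := fun i => rowSigma X i)
  have hn : (0 : ℝ) < n := Nat.cast_pos.2 (pos_of_rowSigma_pos (hσ imin))
  set σmin := ⨅ i, rowSigma X i
  have hmin_pos : 0 < σmin := himin ▸ hσ imin
  have hmin_le : ∀ i, σmin ≤ rowSigma X i := ciInf_le (Finite.bddBelow_range _)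
  calc frob (fderiv ℝ (fun Y => Pmat Y) X V)
      = frob (diagonal fun i => rowSigmaInvFDeriv X i V) := by rw [hP.fderiv, PmatFDeriv_apply]
    _ ≤ (√n * σmin ^ 2)⁻¹ * frob V := by
        refine frob_diagonal_le _ V (by positivity) fun i =>
          (sq_rowSigmaInvFDeriv_apply_le X V (hσ i)).trans ?_
        rw [inv_pow, mul_pow, Real.sq_sqrt hn.le, ← pow_mul]
        gcongr
        exact hmin_le i
    _ ≤ spec X / (√n * σmin ^ 3) * frob V := by
        gcongr ?_ * _
        · exact Real.sqrt_nonneg _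
        rw [show (√n * σmin ^ 2)⁻¹ = σmin / (√n * σmin ^ 3) by
          field_simp [(Real.sqrt_pos.2 hn).ne']]
        gcongr
        exact (hmin_le imin).trans (rowSigma_le_spec X imin)
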